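/- arXiv:1710.04070 — 10 statements merged into one kernel-verified Lean document; each statement's English description precedes it below -/
import Mathlib

section
/- Let X, Y be metric spaces, let f : X → Y be continuous on X, let p ∈ X and ε > 0, and suppose f⁻¹(S[f(p),ε]) is nonempty, so that δ(p,ε) := dist(p, f⁻¹(S[f(p),ε])) is a well-defined positive number. If the open ball B(p, δ(p,ε)) is path-connected, then δ(p,ε) is a delta-epsilon number for f at p: for every x ∈ X with d_X(x,p) < δ(p,ε) one has d_Y(f(x),f(p)) < ε. -/
/-! The function `z ↦ dist (f z) (f p)` vanishes at `p` and, by the definition of `δ`, never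
takes the value `ε` on the ball `B(p, δ)`. The ball is connected, so by the intermediate value
theorem this function stays below `ε` on the whole ball. -/

open Metric

theorem IsPreconnected.dist_lt_of_forall_dist_ne {X Y : Type*} [TopologicalSpace X]
    [PseudoMetricSpace Y] {S : Set X} (hS : IsPreconnected S) {f : X → Y}
    (hf : ContinuousOn f S) {p x : X} (hp : p ∈ S) (hx : x ∈ S) {ε : ℝ} (hε : 0 ≤ ε)
    (hne : ∀ z ∈ S, dist (f z) (f p) ≠ ε) : dist (f x) (f p) < ε := by
  by_contra! hxε
  have hg : ContinuousOn (fun z ↦ dist (f z) (f p)) S :=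
    continuous_dist.comp_continuousOn (hf.prodMk continuousOn_const)
  obtain ⟨z, hz, hzε⟩ := hS.intermediate_value hp hx hg ⟨by simpa using hε, hxε⟩
  exact hne z hz hzε

theorem delta_is_delta_epsilon_number_general {X Y : Type*} [MetricSpace X] [MetricSpace Y]
    (f : X → Y) (hf : Continuous f) (p : X) (ε : ℝ) (hε : 0 < ε)
    (δ : ℝ) (hδ : δ = Metric.infDist p (f ⁻¹' Metric.sphere (f p) ε))
    (hball : IsPathConnected (Metric.ball p δ)) :
    ∀ x : X, dist x p < δ → dist (f x) (f p) < ε := by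
  intro x hx
  have hp : p ∈ ball p δ := mem_ball_self (dist_nonneg.trans_lt hx)
  have hsphere : ∀ z ∈ ball p δ, dist (f z) (f p) ≠ ε := fun z hz hzε ↦
    (hδ ▸ disjoint_ball_infDist).notMem_of_mem_left hz (mem_sphere.mpr hzε)
  exact hball.isConnected.isPreconnected.dist_lt_of_forall_dist_ne hf.continuousOn hp hx hε.le
    hsphere

/-- If `f : X → Y` is continuous, `ε > 0`, the preimage of the sphere `S[f p, ε]`
is nonempty, and the open ball `B(p, δ(p,ε))` is path-connected, where
`δ(p,ε) = dist(p, f⁻¹(S[f p, ε]))`, then `δ(p,ε)` is a delta-epsilon number for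
`f` at `p`. -/
theorem delta_is_delta_epsilon_number {X Y : Type*} [MetricSpace X] [MetricSpace Y]
    (f : X → Y) (hf : Continuous f) (p : X) (ε : ℝ) (hε : 0 < ε)
    (hne : (f ⁻¹' Metric.sphere (f p) ε).Nonempty)
    (δ : ℝ) (hδ : δ = Metric.infDist p (f ⁻¹' Metric.sphere (f p) ε))
    (hball : IsPathConnected (Metric.ball p δ)) :
    ∀ x : X, dist x p < δ → dist (f x) (f p) < ε :=
  delta_is_delta_epsilon_number_general f hf p ε hε δ hδ hball
end

section
/- Let X, Y be metric spaces, let f : X → Y be continuous on X, let p ∈ X and ε > 0, suppose f⁻¹(S[f(p),ε]) is nonempty, and suppose the open ball B(p, δ(p,ε)) is path-connected, where δ(p,ε) := dist(p, f⁻¹(S[f(p),ε])). Define D_{p,ε} = { β > 0 : for all x ∈ X, d_X(x,p) < β implies d_Y(f(x),f(p)) < ε }. Then δ(p,ε) = max D_{p,ε}, and D_{p,ε} equals the half-open interval (0, δ(p,ε)]. -/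
/-- Under the hypotheses of the main theorem (continuity, nonempty preimage of the
sphere, path-connected ball `B(p, δ(p,ε))`), the number
`δ(p,ε) = dist(p, f⁻¹(S[f p, ε]))` is the maximum of the set `D_{p,ε}` of
delta-epsilon numbers, and `D_{p,ε} = (0, δ(p,ε)]`. -/
theorem delta_is_max_and_D_eq_Ioc {X Y : Type*} [MetricSpace X] [MetricSpace Y]
    (f : X → Y) (hf : Continuous f) (p : X) (ε : ℝ) (hε : 0 < ε)
    (hne : (f ⁻¹' Metric.sphere (f p) ε).Nonempty)
    (hball : IsPathConnected
      (Metric.ball p (Metric.infDist p (f ⁻¹' Metric.sphere (f p) ε)))) :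
    IsGreatest {β : ℝ | 0 < β ∧ ∀ x : X, dist x p < β → dist (f x) (f p) < ε}
      (Metric.infDist p (f ⁻¹' Metric.sphere (f p) ε)) ∧
    {β : ℝ | 0 < β ∧ ∀ x : X, dist x p < β → dist (f x) (f p) < ε}
      = Set.Ioc 0 (Metric.infDist p (f ⁻¹' Metric.sphere (f p) ε)) := by
  set S := f ⁻¹' Metric.sphere (f p) ε with hS
  set δ := Metric.infDist p S with hδ
  obtain ⟨x₀, hx₀, -⟩ := id hball
  have hδpos : 0 < δ := lt_of_le_of_lt dist_nonneg (Metric.mem_ball.mp hx₀)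
  have hp : p ∈ Metric.ball p δ := Metric.mem_ball_self hδpos
  have hkey : ∀ x : X, dist x p < δ → dist (f x) (f p) < ε := by
    intro x hx
    have hxball : x ∈ Metric.ball p δ := Metric.mem_ball.mpr hx
    obtain ⟨γ, hγ⟩ := hball.joinedIn p hp x hxball
    by_contra h
    push_neg at h
    have hrange : ε ∈ Set.range (fun t => dist (f (γ t)) (f p)) := by
      apply intermediate_value_univ (0 : unitInterval) 1
        ((hf.comp γ.continuous).dist continuous_const)
      simp only [Function.comp_apply, γ.source, γ.target, Set.mem_Icc, dist_self]
      exact ⟨hε.le, h⟩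
    obtain ⟨t, ht⟩ := hrange
    have hmem : γ t ∈ S := by
      simp only [hS, Set.mem_preimage, Metric.mem_sphere]
      exact ht
    have h1 : δ ≤ dist p (γ t) := Metric.infDist_le_dist_of_mem hmem
    have h2 : dist (γ t) p < δ := Metric.mem_ball.mp (hγ t)
    rw [dist_comm] at h1
    linarith
  have hub : ∀ β ∈ {β : ℝ | 0 < β ∧ ∀ x : X, dist x p < β → dist (f x) (f p) < ε},
      β ≤ δ := by
    rintro β ⟨hβ, hβ2⟩
    by_contra hlt
    push_neg at hlt
    obtain ⟨y, hyS, hyd⟩ := (Metric.infDist_lt_iff hne).mp hlt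
    rw [dist_comm] at hyd
    have h1 : dist (f y) (f p) < ε := hβ2 y hyd
    have h2 : dist (f y) (f p) = ε := hyS
    linarith
  have hmem : δ ∈ {β : ℝ | 0 < β ∧ ∀ x : X, dist x p < β → dist (f x) (f p) < ε} :=
    ⟨hδpos, hkey⟩
  refine ⟨⟨hmem, hub⟩, ?_⟩
  ext β
  constructor
  · intro hβ
    exact ⟨hβ.1, hub β hβ⟩
  · rintro ⟨h1, h2⟩
    exact ⟨h1, fun x hx => hkey x (lt_of_lt_of_le hx h2)⟩
end

section
/- Let X, Y be metric spaces and f : X → Y continuous on X. Suppose there exist p, x ∈ X with d_Y(f(x),f(p)) = β > 0 and a continuous path in X connecting p and x. If for every ε with 0 < ε < β the open balls B(p, δ(p,ε)) and B(x, δ(x,ε)) are path-connected, where δ(q,ε) := dist(q, f⁻¹(S[f(q),ε])), then for every such ε, δ(p,ε) and δ(x,ε) are delta-epsilon numbers for f at p and at x respectively: for all z ∈ X, d_X(z,p) < δ(p,ε) implies d_Y(f(z),f(p)) < ε, and d_X(z,x) < δ(x,ε) implies d_Y(f(z),f(x)) < ε. -/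
/-! On the connected ball `B(q, δ(q,ε))` the function `z ↦ d(f z, f q)` vanishes at `q` and
never takes the value `ε`, since the ball misses `f⁻¹(S[f q, ε])` by the definition of `δ(q,ε)`
as the distance to that set. By the intermediate value theorem it stays below `ε`. -/

section

open Metric Set

variable {Y : Type*} [MetricSpace Y]

theorem IsPreconnected.mapsTo_ball_of_disjoint_preimage_sphere {X : Type*} [TopologicalSpace X]
    {S : Set X} {f : X → Y}
    (hS : IsPreconnected S) (hf : ContinuousOn f S) {q : X} (hq : q ∈ S) {y : Y} {ε : ℝ}
    (hqε : dist (f q) y < ε) (hdisj : Disjoint S (f ⁻¹' sphere y ε)) :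
    MapsTo f S (ball y ε) := by
  intro z hz
  by_contra hzε
  have hIcc : Icc (dist (f q) y) (dist (f z) y) ⊆ (fun w => dist (f w) y) '' S :=
    hS.intermediate_value hq hz ((continuous_id.dist continuous_const).comp_continuousOn hf)
  obtain ⟨w, hwS, hw⟩ := hIcc ⟨hqε.le, not_lt.mp hzε⟩
  exact hdisj.ne_of_mem hwS (mem_preimage.mpr hw) rfl

theorem Continuous.dist_lt_of_dist_lt_infDist_preimage_sphere {X : Type*} [MetricSpace X]
    {f : X → Y} (hf : Continuous f) {q : X} {ε : ℝ} (hε : 0 < ε)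
    (hconn : IsPreconnected (ball q (infDist q (f ⁻¹' sphere (f q) ε)))) {z : X}
    (hz : dist z q < infDist q (f ⁻¹' sphere (f q) ε)) :
    dist (f z) (f q) < ε :=
  hconn.mapsTo_ball_of_disjoint_preimage_sphere hf.continuousOn
    (mem_ball_self (dist_nonneg.trans_lt hz)) (by rwa [dist_self]) disjoint_ball_infDist hz

end

theorem delta_epsilon_numbers_of_joined_general {X Y : Type*} [MetricSpace X] [MetricSpace Y]
    (f : X → Y) (hf : Continuous f) (p x : X) (β : ℝ)
    (hball : ∀ ε : ℝ, 0 < ε → ε < β →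
      IsPathConnected (Metric.ball p (Metric.infDist p (f ⁻¹' Metric.sphere (f p) ε))) ∧
      IsPathConnected (Metric.ball x (Metric.infDist x (f ⁻¹' Metric.sphere (f x) ε)))) :
    ∀ ε : ℝ, 0 < ε → ε < β →
      (∀ z : X, dist z p < Metric.infDist p (f ⁻¹' Metric.sphere (f p) ε) →
        dist (f z) (f p) < ε) ∧
      (∀ z : X, dist z x < Metric.infDist x (f ⁻¹' Metric.sphere (f x) ε) →
        dist (f z) (f x) < ε) := by
  intro ε hε hεβ
  obtain ⟨hp, hx⟩ := hball ε hε hεβ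
  exact ⟨fun _ => hf.dist_lt_of_dist_lt_infDist_preimage_sphere hε hp.isConnected.isPreconnected,
    fun _ => hf.dist_lt_of_dist_lt_infDist_preimage_sphere hε hx.isConnected.isPreconnected⟩

/-- If `f : X → Y` is continuous, `p, x ∈ X` satisfy `dist (f x) (f p) = β > 0`,
`p` and `x` are joined by a path, and for every `0 < ε < β` the balls
`B(p, δ(p,ε))` and `B(x, δ(x,ε))` are path-connected, then for every such `ε` the
numbers `δ(p,ε)` and `δ(x,ε)` are delta-epsilon numbers for `f` at `p` and at `x`
respectively. -/
theorem delta_epsilon_numbers_of_joined {X Y : Type*} [MetricSpace X] [MetricSpace Y]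
    (f : X → Y) (hf : Continuous f) (p x : X) (β : ℝ)
    (hβ : dist (f x) (f p) = β) (hβpos : 0 < β) (hpath : Joined p x)
    (hball : ∀ ε : ℝ, 0 < ε → ε < β →
      IsPathConnected (Metric.ball p (Metric.infDist p (f ⁻¹' Metric.sphere (f p) ε))) ∧
      IsPathConnected (Metric.ball x (Metric.infDist x (f ⁻¹' Metric.sphere (f x) ε)))) :
    ∀ ε : ℝ, 0 < ε → ε < β →
      (∀ z : X, dist z p < Metric.infDist p (f ⁻¹' Metric.sphere (f p) ε) →
        dist (f z) (f p) < ε) ∧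
      (∀ z : X, dist z x < Metric.infDist x (f ⁻¹' Metric.sphere (f x) ε) →
        dist (f z) (f x) < ε) :=
  delta_epsilon_numbers_of_joined_general f hf p x β hball
end

section
/- Let X, Y be metric spaces and f : X → Y continuous on X. Suppose there exist p, x ∈ X with d_Y(f(x),f(p)) = β > 0, suppose the open ball B(p, δ(p,β)) is path-connected (where δ(p,β) := dist(p, f⁻¹(S[f(p),β]))), and suppose there exists a continuous path connecting p and x. Assume further that every point of X can be connected to x by a continuous path. Then for every ε with 0 < ε < β there exists δ with 0 < δ ≤ δ(p,β) such that for every q ∈ X with d_X(q,p) < δ: the set f⁻¹(S[f(q),ε]) is nonempty, hence δ(q,ε) := dist(q, f⁻¹(S[f(q),ε])) is well defined and positive. -/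
/-- Suppose `f : X → Y` is continuous, `dist (f x) (f p) = β > 0`, the ball
`B(p, δ(p,β))` is path-connected, `p` and `x` are joined by a path, and every
point of `X` can be joined to `x` by a path. Then for every `0 < ε < β` there is
`0 < δ ≤ δ(p,β)` such that for every `q` with `dist q p < δ` the preimage
`f⁻¹(S[f q, ε])` is nonempty and `δ(q,ε)` is positive. -/
theorem delta_epsilon_defined_near_p {X Y : Type*} [MetricSpace X] [MetricSpace Y]
    (f : X → Y) (hf : Continuous f) (p x : X) (β : ℝ)
    (hβ : dist (f x) (f p) = β) (hβpos : 0 < β)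
    (hball : IsPathConnected
      (Metric.ball p (Metric.infDist p (f ⁻¹' Metric.sphere (f p) β))))
    (hpx : Joined p x) (hall : ∀ q : X, Joined q x) :
    ∀ ε : ℝ, 0 < ε → ε < β →
      ∃ δ : ℝ, 0 < δ ∧ δ ≤ Metric.infDist p (f ⁻¹' Metric.sphere (f p) β) ∧
        ∀ q : X, dist q p < δ →
          (f ⁻¹' Metric.sphere (f q) ε).Nonempty ∧
          0 < Metric.infDist q (f ⁻¹' Metric.sphere (f q) ε) := by
  intro ε hε hεβ
  have hx : x ∈ f ⁻¹' Metric.sphere (f p) β := by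
    simpa [Metric.mem_sphere] using hβ
  have hclosed : IsClosed (f ⁻¹' Metric.sphere (f p) β) :=
    Metric.isClosed_sphere.preimage hf
  have hpnot : p ∉ f ⁻¹' Metric.sphere (f p) β := by
    simp only [Set.mem_preimage, Metric.mem_sphere, dist_self]
    exact hβpos.ne
  have hDpos : 0 < Metric.infDist p (f ⁻¹' Metric.sphere (f p) β) :=
    (hclosed.notMem_iff_infDist_pos ⟨x, hx⟩).1 hpnot
  obtain ⟨δ', hδ'pos, hδ'⟩ := Metric.continuous_iff.mp hf p (β - ε) (by linarith)
  refine ⟨min δ' (Metric.infDist p (f ⁻¹' Metric.sphere (f p) β)),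
    lt_min hδ'pos hDpos, min_le_right _ _, ?_⟩
  intro q hq
  have hq' : dist (f q) (f p) < β - ε := hδ' q (lt_of_lt_of_le hq (min_le_left _ _))
  obtain ⟨γ⟩ := hall q
  set g : ℝ → ℝ := fun t => dist (f (γ.extend t)) (f q) with hg
  have hgc : Continuous g := (hf.comp γ.continuous_extend).dist continuous_const
  have hg0 : g 0 = 0 := by simp [hg]
  have hg1 : ε ≤ g 1 := by
    have htri : β ≤ dist (f x) (f q) + dist (f q) (f p) := hβ ▸ dist_triangle _ _ _
    have : g 1 = dist (f x) (f q) := by simp [hg]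
    linarith
  have hmem : ε ∈ Set.Icc (g 0) (g 1) := ⟨by rw [hg0]; exact hε.le, hg1⟩
  obtain ⟨t, _, ht⟩ := intermediate_value_Icc (by norm_num : (0:ℝ) ≤ 1)
    (hgc.continuousOn) hmem
  have hne : (f ⁻¹' Metric.sphere (f q) ε).Nonempty :=
    ⟨γ.extend t, by simpa [Metric.mem_sphere, hg] using ht⟩
  refine ⟨hne, ?_⟩
  have hclosed' : IsClosed (f ⁻¹' Metric.sphere (f q) ε) :=
    Metric.isClosed_sphere.preimage hf
  have hqnot : q ∉ f ⁻¹' Metric.sphere (f q) ε := by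
    simp only [Set.mem_preimage, Metric.mem_sphere, dist_self]
    exact hε.ne
  exact (hclosed'.notMem_iff_infDist_pos hne).1 hqnot
end

section
/- Let X be a path-connected metric space all of whose open balls B(p,r) (p ∈ X, r > 0) are path-connected, let Y be a metric space, and let f : X → Y be a nonconstant continuous function. Then there exists β > 0 such that for every p ∈ X and every ε with 0 < ε < β, the set f⁻¹(S[f(p),ε]) is nonempty; hence δ(p,ε) := dist(p, f⁻¹(S[f(p),ε])) is well defined and positive on X × (0,β). -/
/-- Let `X` be a path-connected metric space all of whose open balls are
path-connected and let `f : X → Y` be a nonconstant continuous function. Then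
there is `β > 0` such that for all `p ∈ X` and `0 < ε < β` the preimage
`f⁻¹(S[f p, ε])` is nonempty and `δ(p,ε)` is positive. -/
theorem delta_epsilon_defined_everywhere {X Y : Type*} [MetricSpace X] [MetricSpace Y]
    [PathConnectedSpace X]
    (hballs : ∀ (p : X) (r : ℝ), 0 < r → IsPathConnected (Metric.ball p r))
    (f : X → Y) (hf : Continuous f) (hnc : ∃ a b : X, f a ≠ f b) :
    ∃ β : ℝ, 0 < β ∧ ∀ p : X, ∀ ε : ℝ, 0 < ε → ε < β →
      (f ⁻¹' Metric.sphere (f p) ε).Nonempty ∧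
      0 < Metric.infDist p (f ⁻¹' Metric.sphere (f p) ε) := by
  obtain ⟨a, b, hab⟩ := hnc
  refine ⟨dist (f a) (f b) / 2, half_pos (dist_pos.2 hab), fun p ε hε hεβ => ?_⟩
  -- choose q ∈ {a, b} with dist (f p) (f q) ≥ β > ε
  have hq : ∃ q : X, ε < dist (f p) (f q) := by
    by_contra h
    push_neg at h
    have := dist_triangle (f a) (f p) (f b)
    have ha := h a
    have hb := h b
    rw [dist_comm (f a) (f p)] at this
    linarith
  obtain ⟨q, hq⟩ := hq
  have hne : (f ⁻¹' Metric.sphere (f p) ε).Nonempty := by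
    obtain ⟨γ⟩ : Nonempty (Path p q) := ⟨PathConnectedSpace.somePath p q⟩
    have hg : Continuous fun t : ℝ => dist (f (γ.extend t)) (f p) :=
      (hf.comp γ.continuous_extend).dist continuous_const
    have h0 : dist (f (γ.extend 0)) (f p) = 0 := by simp
    have h1 : ε ≤ dist (f (γ.extend 1)) (f p) := by
      rw [γ.extend_one, dist_comm]; exact hq.le
    obtain ⟨t, _, ht⟩ := intermediate_value_Icc (by norm_num : (0:ℝ) ≤ 1)
      hg.continuousOn (by rw [h0]; exact ⟨hε.le, h1⟩)
    exact ⟨γ.extend t, ht⟩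
  refine ⟨hne, ?_⟩
  have hcl : IsClosed (f ⁻¹' Metric.sphere (f p) ε) :=
    (Metric.isClosed_sphere).preimage hf
  rw [← hcl.notMem_iff_infDist_pos hne]
  simp only [Set.mem_preimage, Metric.mem_sphere, dist_self]
  exact hε.ne
end

section
/- Let X, Y be metric spaces and f : X → Y continuous on X, and suppose all open balls of X are path-connected. Let p ∈ X and let 0 < a < b be such that f⁻¹(S[f(p),a]) and f⁻¹(S[f(p),b]) are both nonempty. Then δ(p,a) ≤ δ(p,b), where δ(p,ε) := dist(p, f⁻¹(S[f(p),ε])); that is, ε ↦ δ(p,ε) is monotone nondecreasing. -/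
/-- Monotonicity of the delta-epsilon function in `ε`: if `f : X → Y` is
continuous, all open balls of `X` are path-connected, `0 < a < b`, and the
preimages of the spheres `S[f p, a]` and `S[f p, b]` are nonempty, then
`δ(p,a) ≤ δ(p,b)`. -/
theorem delta_epsilon_monotone {X Y : Type*} [MetricSpace X] [MetricSpace Y]
    (f : X → Y) (hf : Continuous f)
    (hballs : ∀ (q : X) (r : ℝ), 0 < r → IsPathConnected (Metric.ball q r))
    (p : X) (a b : ℝ) (ha : 0 < a) (hab : a < b)
    (hna : (f ⁻¹' Metric.sphere (f p) a).Nonempty)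
    (hnb : (f ⁻¹' Metric.sphere (f p) b).Nonempty) :
    Metric.infDist p (f ⁻¹' Metric.sphere (f p) a)
      ≤ Metric.infDist p (f ⁻¹' Metric.sphere (f p) b) := by
  have key : ∀ q ∈ f ⁻¹' Metric.sphere (f p) b,
      Metric.infDist p (f ⁻¹' Metric.sphere (f p) a) ≤ dist p q := by
    intro q hq
      -- it suffices to show `infDist p A ≤ dist p q + ε` for all `ε > 0`
    refine le_of_forall_pos_le_add fun ε hε => ?_
    set r := dist p q + ε with hr
    have hr0 : 0 < r := add_pos_of_nonneg_of_pos dist_nonneg hε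
    have hpc := hballs p r hr0
    have hpmem : p ∈ Metric.ball p r := Metric.mem_ball_self hr0
    have hqmem : q ∈ Metric.ball p r := by
      simp [Metric.mem_ball, dist_comm, hr, hε]
    obtain ⟨γ, hγ⟩ := hpc.joinedIn p hpmem q hqmem
    -- the function t ↦ dist (f (γ t)) (f p) is continuous, 0 at t = 0 and b at t = 1
    set g : unitInterval → ℝ := fun t => dist (f (γ t)) (f p) with hg
    have hgc : Continuous g := (hf.comp γ.continuous).dist continuous_const
    have h0 : g 0 = 0 := by simp [hg]
    have h1 : g 1 = b := by
      simp only [hg, γ.target]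
      simpa [dist_comm] using hq
    have : a ∈ Set.range g := by
      apply intermediate_value_univ 0 1 hgc
      rw [h0, h1]
      exact ⟨ha.le, hab.le⟩
    obtain ⟨t, ht⟩ := this
    have hmem : γ t ∈ f ⁻¹' Metric.sphere (f p) a := by
      simpa [Metric.mem_sphere, hg, dist_comm] using ht
    calc Metric.infDist p (f ⁻¹' Metric.sphere (f p) a) ≤ dist p (γ t) :=
          Metric.infDist_le_dist_of_mem hmem
      _ ≤ r := by have := hγ t; rw [Metric.mem_ball, dist_comm] at this; exact this.le

  apply le_of_not_gt
  intro h
  obtain ⟨q, hq, hlt⟩ := (Metric.infDist_lt_iff hnb).1 h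
  exact absurd hlt (not_lt.2 (key q hq))
end

section
/- Let X be a compact path-connected metric space all of whose open balls are path-connected, let Y be a metric space, and let f : X → Y be a nonconstant continuous function. Let p ∈ X and ε > 0 be such that f⁻¹(S[f(p),ε']) is nonempty for all ε' with 0 < ε' ≤ ε. Then lim_{n→∞} δ(p, ε − 1/n) = δ(p,ε), where δ(p,ε') := dist(p, f⁻¹(S[f(p),ε'])); that is, the increasing sequence δ(p, ε − 1/n) converges to δ(p,ε). -/
/-!
Write `g y = d(f y, f p)`, so that `δ(p, r)` is the distance from `p` to the level set
`g⁻¹{r}`. Since `g p = 0`, the intermediate value theorem on a connected ball around `p`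
reaching almost to `g⁻¹{ε}` finds every level `0 ≤ r ≤ ε` inside that ball, so
`δ(p, r) ≤ δ(p, ε)`. Conversely, for `b < δ(p, ε)` the compact closed ball of radius `b`
has a compact image under `g` missing `ε`, hence missing all levels near `ε`, and those
levels stay farther than `b` from `p`.
-/

open Metric Set Filter Topology

section

variable {X : Type*} [MetricSpace X] {g : X → ℝ} {p : X}

lemma infDist_preimage_singleton_le (hg : Continuous g)
    (hballs : ∀ r, 0 < r → IsPreconnected (ball p r)) {s t : ℝ} (ht : t ∈ Icc (g p) s)
    (hs : (g ⁻¹' {s}).Nonempty) :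
    infDist p (g ⁻¹' {t}) ≤ infDist p (g ⁻¹' {s}) := by
  refine le_of_forall_pos_lt_add fun η hη => ?_
  set R := infDist p (g ⁻¹' {s}) + η
  obtain ⟨x, hx, hxR⟩ := (infDist_lt_iff hs).mp (lt_add_of_pos_right _ hη : _ < R)
  have hR : 0 < R := add_pos_of_nonneg_of_pos infDist_nonneg hη
  have hpB : p ∈ ball p R := mem_ball_self hR
  have hxB : x ∈ ball p R := mem_ball_comm.mp hxR
  have hxs : g x = s := hx
  obtain ⟨y, hyB, hyt⟩ := (hballs R hR).intermediate_value hpB hxB hg.continuousOn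
    (hxs ▸ ht)
  calc infDist p (g ⁻¹' {t}) ≤ dist p y := infDist_le_dist_of_mem hyt
    _ < R := mem_ball_comm.mp hyB

lemma eventually_forall_lt_dist_of_lt_infDist [ProperSpace X] (hg : Continuous g)
    {b c : ℝ} (hb : b < infDist p (g ⁻¹' {c})) :
    ∀ᶠ t in 𝓝 c, ∀ y ∈ g ⁻¹' {t}, b < dist p y := by
  have hK : IsClosed (g '' closedBall p b) :=
    ((isCompact_closedBall p b).image hg).isClosed
  have hc : c ∉ g '' closedBall p b := by
    rintro ⟨y, hyK, hyc⟩
    have : infDist p (g ⁻¹' {c}) ≤ dist p y := infDist_le_dist_of_mem hyc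
    linarith [mem_closedBall'.mp hyK]
  filter_upwards [hK.isOpen_compl.mem_nhds hc] with t ht y hyt
  have hyK : y ∉ closedBall p b := fun hyK => ht ⟨y, hyK, hyt⟩
  exact lt_of_not_ge fun h => hyK (mem_closedBall'.mpr h)

lemma eventually_lt_infDist_preimage_singleton [ProperSpace X] (hg : Continuous g)
    {b c : ℝ} (hb : b < infDist p (g ⁻¹' {c})) :
    ∀ᶠ t in 𝓝 c, (g ⁻¹' {t}).Nonempty → b < infDist p (g ⁻¹' {t}) := by
  obtain ⟨b', hbb', hb'⟩ := exists_between hb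
  filter_upwards [eventually_forall_lt_dist_of_lt_infDist hg hb'] with t hfar hne
  exact hbb'.trans_le ((le_infDist hne).mpr fun y hy => (hfar y hy).le)

end

theorem delta_epsilon_left_continuous_general {X Y : Type*} [MetricSpace X] [MetricSpace Y]
    [CompactSpace X]
    (hballs : ∀ (q : X) (r : ℝ), 0 < r → IsPathConnected (Metric.ball q r))
    (f : X → Y) (hf : Continuous f)
    (p : X) (ε : ℝ) (hε : 0 < ε)
    (hne : ∀ ε' : ℝ, 0 < ε' → ε' ≤ ε → (f ⁻¹' Metric.sphere (f p) ε').Nonempty) :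
    Filter.Tendsto
      (fun n : ℕ => Metric.infDist p (f ⁻¹' Metric.sphere (f p) (ε - 1 / n)))
      Filter.atTop
      (nhds (Metric.infDist p (f ⁻¹' Metric.sphere (f p) ε))) := by
  set g : X → ℝ := fun y => dist (f y) (f p)
  have hg : Continuous g := hf.dist continuous_const
  have hlevel : ∀ r, f ⁻¹' sphere (f p) r = g ⁻¹' {r} := fun r => rfl
  have hεn : Tendsto (fun n : ℕ => ε - 1 / n) atTop (𝓝 ε) := by
    simpa using tendsto_const_nhds.sub (tendsto_one_div_atTop_nhds_zero_nat (𝕜 := ℝ))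
  have hεn_mem : ∀ᶠ n : ℕ in atTop, ε - 1 / n ∈ Ioc 0 ε := by
    filter_upwards [hεn.eventually (eventually_gt_nhds hε)] with n hn
    exact ⟨hn, sub_le_self ε (by positivity)⟩
  simp only [hlevel] at hne ⊢
  rw [tendsto_order]
  refine ⟨fun b hb => ?_, fun b hb => ?_⟩
  · filter_upwards [hεn.eventually (eventually_lt_infDist_preimage_singleton hg hb),
      hεn_mem] with n hlt hn
    exact hlt (hne _ hn.1 hn.2)
  · filter_upwards [hεn_mem] with n hn
    refine lt_of_le_of_lt (infDist_preimage_singleton_le hg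
      (fun r hr => (hballs p r hr).isConnected.isPreconnected) ?_ (hne ε hε le_rfl)) hb
    exact ⟨(dist_self (f p)).trans_le hn.1.le, hn.2⟩

/-- Left continuity of the delta-epsilon function in `ε`: under the hypotheses
(`X` compact, path-connected, with path-connected open balls, `f` nonconstant
continuous, preimages of the spheres `S[f p, ε']` nonempty for `0 < ε' ≤ ε`), the
sequence `δ(p, ε - 1/n)` converges to `δ(p, ε)`. -/
theorem delta_epsilon_left_continuous {X Y : Type*} [MetricSpace X] [MetricSpace Y]
    [CompactSpace X] [PathConnectedSpace X]
    (hballs : ∀ (q : X) (r : ℝ), 0 < r → IsPathConnected (Metric.ball q r))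
    (f : X → Y) (hf : Continuous f) (hnc : ∃ a b : X, f a ≠ f b)
    (p : X) (ε : ℝ) (hε : 0 < ε)
    (hne : ∀ ε' : ℝ, 0 < ε' → ε' ≤ ε → (f ⁻¹' Metric.sphere (f p) ε').Nonempty) :
    Filter.Tendsto
      (fun n : ℕ => Metric.infDist p (f ⁻¹' Metric.sphere (f p) (ε - 1 / n)))
      Filter.atTop
      (nhds (Metric.infDist p (f ⁻¹' Metric.sphere (f p) ε))) :=
  delta_epsilon_left_continuous_general hballs f hf p ε hε hne
end

section
/- Let X be a compact path-connected metric space all of whose open balls are path-connected, let Y be a metric space, and let f : X → Y be a nonconstant continuous function, with β > 0 such that f⁻¹(S[f(q),ε']) is nonempty for every q ∈ X and 0 < ε' < β. Let p ∈ X, let (x_n) be a sequence in X converging to p, and let ε and r > 0 satisfy 0 < ε − r and ε + r < β. Then there exists n₀ ∈ ℕ such that for all n > n₀: δ(p, ε − r) − r ≤ δ(x_n, ε) ≤ δ(p, ε + r) + r, where δ(q,ε') := dist(q, f⁻¹(S[f(q),ε'])). -/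
/-!
If `f w` lies on the `ε`-sphere about `f (x n)` and `f (x n)` is `r`-close to `f p`, then
`dist (f p) (f w) ≥ ε - r`, so the intermediate value theorem on balls about `p` produces points of
the `(ε - r)`-sphere about `f p` at distance at most `dist p w` (up to any `σ > 0`). Hence
`δ(p, ε - r) ≤ δ(x n, ε) + dist p (x n)`; the upper bound is the same argument with `p` and `x n`
exchanged.
-/

open Metric Set Filter

section SphereDistance

variable {X Y : Type*} [MetricSpace X] [MetricSpace Y] {f : X → Y} {q w : X} {c : ℝ}

theorem infDist_preimage_sphere_le_dist (hf : Continuous f)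
    (hball : ∀ ρ > 0, IsPreconnected (ball q ρ)) (hc : 0 ≤ c) (hw : c ≤ dist (f q) (f w)) :
    infDist q (f ⁻¹' sphere (f q) c) ≤ dist q w := by
  refine le_of_forall_pos_le_add fun σ hσ => ?_
  have hρ : 0 < dist q w + σ := by positivity
  have hw_mem : w ∈ ball q (dist q w + σ) := by rw [mem_ball']; linarith
  obtain ⟨v, hv, hfv⟩ := (hball _ hρ).intermediate_value (mem_ball_self hρ) hw_mem
    (hf.dist continuous_const).continuousOn (a := q) (b := w) (f := fun y => dist (f y) (f q))
    ⟨by simpa using hc, by rwa [dist_comm]⟩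
  calc infDist q (f ⁻¹' sphere (f q) c) ≤ dist q v := infDist_le_dist_of_mem hfv
    _ ≤ dist q w + σ := (mem_ball'.1 hv).le

theorem infDist_preimage_sphere_le_infDist (hf : Continuous f)
    (hball : ∀ ρ > 0, IsPreconnected (ball q ρ)) (hc : 0 ≤ c) {s : Set X} (hs : s.Nonempty)
    (h : ∀ w ∈ s, c ≤ dist (f q) (f w)) :
    infDist q (f ⁻¹' sphere (f q) c) ≤ infDist q s :=
  (le_infDist hs).2 fun w hw => infDist_preimage_sphere_le_dist hf hball hc (h w hw)

end SphereDistance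

theorem delta_epsilon_sequence_estimate_general {X Y : Type*} [MetricSpace X] [MetricSpace Y]
    (hballs : ∀ (q : X) (r : ℝ), 0 < r → IsPathConnected (Metric.ball q r))
    (f : X → Y) (hf : Continuous f)
    (β : ℝ)
    (hne : ∀ (q : X) (ε' : ℝ), 0 < ε' → ε' < β →
      (f ⁻¹' Metric.sphere (f q) ε').Nonempty)
    (p : X) (x : ℕ → X) (hx : Filter.Tendsto x Filter.atTop (nhds p))
    (ε r : ℝ) (hr : 0 < r) (hεr : 0 < ε - r) (hεrβ : ε + r < β) :
    ∃ n₀ : ℕ, ∀ n : ℕ, n > n₀ →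
      Metric.infDist p (f ⁻¹' Metric.sphere (f p) (ε - r)) - r
        ≤ Metric.infDist (x n) (f ⁻¹' Metric.sphere (f (x n)) ε) ∧
      Metric.infDist (x n) (f ⁻¹' Metric.sphere (f (x n)) ε)
        ≤ Metric.infDist p (f ⁻¹' Metric.sphere (f p) (ε + r)) + r := by
  have hball (q : X) : ∀ ρ > 0, IsPreconnected (ball q ρ) :=
    fun ρ hρ => (hballs q ρ hρ).isConnected.isPreconnected
  obtain ⟨n₀, hn₀⟩ := eventually_atTop.1 ((tendsto_nhds.1 hx r hr).and
    (tendsto_nhds.1 ((hf.tendsto p).comp hx) r hr))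
  refine ⟨n₀, fun n hn => ?_⟩
  have hxp : dist p (x n) < r := dist_comm p (x n) ▸ (hn₀ n hn.le).1
  have hfxp : dist (f p) (f (x n)) < r := dist_comm (f p) _ ▸ (hn₀ n hn.le).2
  constructor
  · have hle := infDist_preimage_sphere_le_infDist hf (hball p) hεr.le
      (hne (x n) ε (by linarith) (by linarith)) fun w hw => by
        have := dist_triangle (f (x n)) (f p) (f w)
        rw [mem_preimage, mem_sphere'] at hw
        linarith [dist_comm (f p) (f (x n))]
    linarith [infDist_le_infDist_add_dist (x := p) (y := x n)
      (s := f ⁻¹' sphere (f (x n)) ε)]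
  · have hle := infDist_preimage_sphere_le_infDist hf (hball (x n)) (by linarith : 0 ≤ ε)
      (hne p (ε + r) (by linarith) hεrβ) fun z hz => by
        have := dist_triangle (f p) (f (x n)) (f z)
        rw [mem_preimage, mem_sphere'] at hz
        linarith
    linarith [dist_comm p (x n), infDist_le_infDist_add_dist (x := x n) (y := p)
      (s := f ⁻¹' sphere (f p) (ε + r))]

/-- Under the hypotheses (`X` compact, path-connected, with path-connected open
balls, `f` nonconstant continuous, `β > 0` with all preimages of spheres of
radius `0 < ε' < β` nonempty), if `x_n → p`, `0 < ε - r` and `ε + r < β` with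
`r > 0`, then eventually `δ(p, ε - r) - r ≤ δ(x_n, ε) ≤ δ(p, ε + r) + r`. -/
theorem delta_epsilon_sequence_estimate {X Y : Type*} [MetricSpace X] [MetricSpace Y]
    [CompactSpace X] [PathConnectedSpace X]
    (hballs : ∀ (q : X) (r : ℝ), 0 < r → IsPathConnected (Metric.ball q r))
    (f : X → Y) (hf : Continuous f) (hnc : ∃ a b : X, f a ≠ f b)
    (β : ℝ) (hβ : 0 < β)
    (hne : ∀ (q : X) (ε' : ℝ), 0 < ε' → ε' < β →
      (f ⁻¹' Metric.sphere (f q) ε').Nonempty)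
    (p : X) (x : ℕ → X) (hx : Filter.Tendsto x Filter.atTop (nhds p))
    (ε r : ℝ) (hr : 0 < r) (hεr : 0 < ε - r) (hεrβ : ε + r < β) :
    ∃ n₀ : ℕ, ∀ n : ℕ, n > n₀ →
      Metric.infDist p (f ⁻¹' Metric.sphere (f p) (ε - r)) - r
        ≤ Metric.infDist (x n) (f ⁻¹' Metric.sphere (f (x n)) ε) ∧
      Metric.infDist (x n) (f ⁻¹' Metric.sphere (f (x n)) ε)
        ≤ Metric.infDist p (f ⁻¹' Metric.sphere (f p) (ε + r)) + r :=
  delta_epsilon_sequence_estimate_general hballs f hf β hne p x hx ε r hr hεr hεrβ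
end

section
/- Let X be a path-connected metric space all of whose open balls are path-connected, let Y be a metric space, and let f : X → Y be a nonconstant continuous function, with β > 0 such that f⁻¹(S[f(x),ε]) is nonempty for all x ∈ X and 0 < ε < β. Then f is not uniformly continuous on X if and only if there exists ε₀ with 0 < ε₀ < β such that inf_{x ∈ X} δ(x,ε₀) = 0, where δ(x,ε₀) := dist(x, f⁻¹(S[f(x),ε₀])). -/
/-!
If `f` is not uniformly continuous, some `ε` is attained as `dist (f x) (f y)` with `x, y`
arbitrarily close. Since the ball around `x` containing `y` is connected, the intermediate value
theorem applied to `z ↦ dist (f x) (f z)` yields a point of `f ⁻¹' S[f x, ε₀]` in that ball for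
every `ε₀ ≤ ε`, so `δ(x, ε₀)` is arbitrarily small. Conversely, if `δ` witnesses uniform
continuity for `ε₀`, then no point of the (nonempty) preimage of `S[f x, ε₀]` lies within `δ`
of `x`, so `δ(x, ε₀) ≥ δ` for all `x`.
-/

open Metric

section PseudoMetric

variable {X Y : Type*} [PseudoMetricSpace X] [PseudoMetricSpace Y] {f : X → Y}

theorem exists_mem_ball_mem_preimage_sphere (hf : Continuous f) {x y : X} {δ ε : ℝ}
    (hball : IsPreconnected (ball x δ)) (hy : dist y x < δ) (hε : 0 ≤ ε)
    (hεy : ε ≤ dist (f x) (f y)) : ∃ z ∈ ball x δ, z ∈ f ⁻¹' sphere (f x) ε := by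
  have hx : x ∈ ball x δ := mem_ball_self (dist_nonneg.trans_lt hy)
  have hmem : ε ∈ Set.Icc (dist (f x) (f x)) (dist (f x) (f y)) := by
    rw [dist_self]
    exact ⟨hε, hεy⟩
  obtain ⟨z, hz, hfz⟩ := hball.intermediate_value hx hy
    (continuous_const.dist hf).continuousOn hmem
  exact ⟨z, hz, mem_sphere'.2 hfz⟩

theorem iInf_infDist_preimage_sphere_eq_zero (hf : Continuous f)
    (hballs : ∀ (q : X) (r : ℝ), 0 < r → IsPreconnected (ball q r)) {ε : ℝ}
    (hbad : ∀ δ > 0, ∃ x y : X, dist x y < δ ∧ ε ≤ dist (f x) (f y))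
    {ε₀ : ℝ} (hε₀ : 0 ≤ ε₀) (hε₀ε : ε₀ ≤ ε) :
    ⨅ x : X, infDist x (f ⁻¹' sphere (f x) ε₀) = 0 := by
  have hbdd : BddBelow (Set.range fun x : X => infDist x (f ⁻¹' sphere (f x) ε₀)) :=
    ⟨0, Set.forall_mem_range.2 fun _ => infDist_nonneg⟩
  refine le_antisymm (le_of_forall_gt_imp_ge_of_dense fun δ hδ => ?_)
    (Real.iInf_nonneg fun _ => infDist_nonneg)
  obtain ⟨x, y, hxy, hεxy⟩ := hbad δ hδ
  obtain ⟨z, hzx, hz⟩ := exists_mem_ball_mem_preimage_sphere hf (hballs x δ hδ)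
    (by rwa [dist_comm]) hε₀ (hε₀ε.trans hεxy)
  calc ⨅ x : X, infDist x (f ⁻¹' sphere (f x) ε₀)
      ≤ infDist x (f ⁻¹' sphere (f x) ε₀) := ciInf_le hbdd x
    _ ≤ dist x z := infDist_le_dist_of_mem hz
    _ ≤ δ := (mem_ball'.1 hzx).le

theorem le_infDist_preimage_sphere {x : X} {δ ε : ℝ} (hne : (f ⁻¹' sphere (f x) ε).Nonempty)
    (hδ : ∀ y, dist x y < δ → dist (f x) (f y) < ε) :
    δ ≤ infDist x (f ⁻¹' sphere (f x) ε) :=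
  (le_infDist hne).2 fun z hz => not_lt.1 fun hzx => (hδ z hzx).ne (mem_sphere'.1 hz)

end PseudoMetric

theorem not_uniformly_continuous_iff_inf_delta_zero_general {X Y : Type*}
    [MetricSpace X] [MetricSpace Y] [PathConnectedSpace X]
    (hballs : ∀ (q : X) (r : ℝ), 0 < r → IsPathConnected (Metric.ball q r))
    (f : X → Y) (hf : Continuous f)
    (β : ℝ) (hβ : 0 < β)
    (hne : ∀ (x : X) (ε : ℝ), 0 < ε → ε < β →
      (f ⁻¹' Metric.sphere (f x) ε).Nonempty) :
    (¬ ∀ ε : ℝ, 0 < ε → ∃ δ : ℝ, 0 < δ ∧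
        ∀ x y : X, dist x y < δ → dist (f x) (f y) < ε) ↔
    (∃ ε₀ : ℝ, 0 < ε₀ ∧ ε₀ < β ∧
      (⨅ x : X, Metric.infDist x (f ⁻¹' Metric.sphere (f x) ε₀)) = 0) := by
  constructor
  · intro hUC
    push Not at hUC
    obtain ⟨ε, hε, hbad⟩ := hUC
    have hε₀ : 0 < min ε (β / 2) := lt_min hε (half_pos hβ)
    refine ⟨min ε (β / 2), hε₀, (min_le_right _ _).trans_lt (half_lt_self hβ), ?_⟩
    exact iInf_infDist_preimage_sphere_eq_zero hf
      (fun q r hr => (hballs q r hr).isConnected.isPreconnected) hbad hε₀.le (min_le_left _ _)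
  · rintro ⟨ε₀, hε₀, hε₀β, hinf⟩ hUC
    obtain ⟨δ, hδ, hδε₀⟩ := hUC ε₀ hε₀
    have : Nonempty X := PathConnectedSpace.nonempty
    have hle : δ ≤ ⨅ x : X, infDist x (f ⁻¹' sphere (f x) ε₀) :=
      le_ciInf fun x => le_infDist_preimage_sphere (hne x ε₀ hε₀ hε₀β) (hδε₀ x)
    linarith

/-- Let `X` be a path-connected metric space all of whose open balls are
path-connected and `f : X → Y` nonconstant continuous, with `β > 0` such that the
preimage of each sphere `S[f x, ε]`, `0 < ε < β`, is nonempty. Then `f` is not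
uniformly continuous on `X` iff there is `0 < ε₀ < β` with
`inf_{x ∈ X} δ(x, ε₀) = 0`. -/
theorem not_uniformly_continuous_iff_inf_delta_zero {X Y : Type*}
    [MetricSpace X] [MetricSpace Y] [PathConnectedSpace X]
    (hballs : ∀ (q : X) (r : ℝ), 0 < r → IsPathConnected (Metric.ball q r))
    (f : X → Y) (hf : Continuous f) (hnc : ∃ a b : X, f a ≠ f b)
    (β : ℝ) (hβ : 0 < β)
    (hne : ∀ (x : X) (ε : ℝ), 0 < ε → ε < β →
      (f ⁻¹' Metric.sphere (f x) ε).Nonempty) :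
    (¬ ∀ ε : ℝ, 0 < ε → ∃ δ : ℝ, 0 < δ ∧
        ∀ x y : X, dist x y < δ → dist (f x) (f y) < ε) ↔
    (∃ ε₀ : ℝ, 0 < ε₀ ∧ ε₀ < β ∧
      (⨅ x : X, Metric.infDist x (f ⁻¹' Metric.sphere (f x) ε₀)) = 0) :=
  not_uniformly_continuous_iff_inf_delta_zero_general hballs f hf β hβ hne
end

section
/- Let I ⊆ ℝ be a nondegenerate interval and g : I → ℝ an increasing bijection onto its image g(I) (an interval), with g continuous. Let p ∈ I and ε > 0 be such that both g(p)+ε and g(p)−ε lie in g(I). Then the number δ(p,ε) = min{ g⁻¹(g(p)+ε) − p, p − g⁻¹(g(p)−ε) } is the maximum delta-epsilon number for g at p: for all x ∈ I, |x − p| < δ(p,ε) implies |g(x) − g(p)| < ε, and no larger positive number has this property. -/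
/-- Let `I ⊆ ℝ` be a nondegenerate interval and `g` strictly increasing and
continuous on `I`. Let `p ∈ I`, `ε > 0`, and suppose `g p + ε` and `g p - ε` are
attained on `I`, say `g xplus = g p + ε` and `g xminus = g p - ε` with `xplus, xminus ∈ I`
(these points are the values of `g⁻¹` at `g p ± ε`). Then
`δ = min (xplus - p) (p - xminus)` is the maximum delta-epsilon number for `g` at `p`:
`δ > 0`, every `x ∈ I` with `|x - p| < δ` satisfies `|g x - g p| < ε`, and every
`δ' > δ` fails this property. -/
theorem increasing_bijection_max_delta_epsilon
    (I : Set ℝ) (hI : I.OrdConnected) (hInd : ∃ a ∈ I, ∃ b ∈ I, a ≠ b)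
    (g : ℝ → ℝ) (hmono : StrictMonoOn g I) (hcont : ContinuousOn g I)
    (p : ℝ) (hp : p ∈ I) (ε : ℝ) (hε : 0 < ε)
    (xplus : ℝ) (hxplus : xplus ∈ I) (hgxplus : g xplus = g p + ε)
    (xminus : ℝ) (hxminus : xminus ∈ I) (hgxminus : g xminus = g p - ε) :
    0 < min (xplus - p) (p - xminus) ∧
    (∀ x ∈ I, |x - p| < min (xplus - p) (p - xminus) → |g x - g p| < ε) ∧
    (∀ δ' : ℝ, min (xplus - p) (p - xminus) < δ' →
      ∃ x ∈ I, |x - p| < δ' ∧ ε ≤ |g x - g p|) := by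
  have hpx : p < xplus := by
    rw [← hmono.lt_iff_lt hp hxplus, hgxplus]; linarith
  have hxm : xminus < p := by
    rw [← hmono.lt_iff_lt hxminus hp, hgxminus]; linarith
  refine ⟨lt_min (by linarith) (by linarith), ?_, ?_⟩
  · intro x hx hlt
    rw [abs_lt] at hlt
    have hl := min_le_left (xplus - p) (p - xminus)
    have hr := min_le_right (xplus - p) (p - xminus)
    have h1 : xminus < x := by linarith [hlt.1]
    have h2 : x < xplus := by linarith [hlt.2]
    have g1 := hmono hxminus hx h1
    have g2 := hmono hx hxplus h2
    rw [abs_lt]; constructor <;> [linarith; linarith]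
  · intro δ' hδ'
    rcases min_cases (xplus - p) (p - xminus) with ⟨hmin, _⟩ | ⟨hmin, _⟩
    · refine ⟨xplus, hxplus, by rw [abs_of_pos (by linarith)]; linarith, ?_⟩
      rw [hgxplus]
      have : g p + ε - g p = ε := by ring
      rw [this, abs_of_pos hε]
    · refine ⟨xminus, hxminus, by rw [abs_of_neg (by linarith)]; linarith, ?_⟩
      rw [hgxminus]
      have : g p - ε - g p = -ε := by ring
      rw [this, abs_neg, abs_of_pos hε]
end
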